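/- arXiv:2401.15923 — 6 statements merged into one kernel-verified Lean document; each statement's English description precedes it below -/
import Mathlib

section
/- Let E be a Banach space and A a subset of E. The following statements are equivalent: (1) the closure of A in the weak topology σ(E,E') is weakly compact; (2) every sequence of elements of A has a subsequence that converges in the weak topology to an element of E; (3) every sequence of elements of A has a cluster point in E with respect to the weak topology. -/
open Filter Topology Set

universe u v

/-- A set is relatively sequentially compact if every sequence in it has a subsequence
converging to a point of the ambient space. -/
def RelSeqCompact {E : Type u} [TopologicalSpace E] (K : Set E) : Prop :=
  ∀ u : ℕ → E, (∀ n, u n ∈ K) →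
    ∃ (x : E) (φ : ℕ → ℕ), StrictMono φ ∧ Tendsto (u ∘ φ) atTop (𝓝 x)

/-- A set is relatively countably compact if every sequence in it has a cluster point
in the ambient space. -/
def RelCountablyCompact {E : Type u} [TopologicalSpace E] (K : Set E) : Prop :=
  ∀ u : ℕ → E, (∀ n, u n ∈ K) → ∃ x : E, MapClusterPt x atTop u

/-!
(1 ⇒ 2) The weak closure `K` of a sequence lies in the norm-closed span of the sequence
(Mazur), which is separable, so countably many functionals separate the points of `K`; being
compact, `K` is then metrizable, hence sequentially compact. (2 ⇒ 3) is immediate.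

(3 ⇒ 1) is Whitley's argument. A relatively countably compact set `A` is weakly bounded, hence
norm bounded, so by Banach–Alaoglu the weak* closure of its image in the bidual is compact; it
remains to show that this closure lies in `E`. For `x` in it, choose inductively `aₙ ∈ A` and
finite sets `Tₙ` of functionals of norm `≤ 1` such that `aₙ` is `1/(n+1)`-close to `x` on `Tₙ`
and `Tₙ₊₁` norms, up to a factor `2`, the finite-dimensional span of `x, a₀, …, aₙ`. A weak
cluster point `w` of `(aₙ)` agrees with `x` on every `Tₙ` and lies in the closed span of the
`aₙ`, so `x - w` lies in the norm closure of a space normed by `⋃ Tₙ` and vanishes on `⋃ Tₙ`;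
hence `x = w`.
-/

open Metric NormedSpace Submodule

section Topology

variable {X Y : Type*} [TopologicalSpace X] [TopologicalSpace Y] {K : Set X}

theorem RelSeqCompact.relCountablyCompact (hK : RelSeqCompact K) : RelCountablyCompact K := by
  intro u hu
  obtain ⟨x, φ, hφ, hx⟩ := hK u hu
  exact ⟨x, hx.mapClusterPt.of_comp hφ.tendsto_atTop⟩

theorem RelCountablyCompact.image (hK : RelCountablyCompact K) {f : X → Y} (hf : Continuous f) :
    RelCountablyCompact (f '' K) := by
  intro v hv
  choose u hu hfu using hv
  obtain ⟨x, hx⟩ := hK u hu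
  obtain rfl : f ∘ u = v := funext hfu
  exact ⟨f x, hx.continuousAt_comp hf.continuousAt⟩

theorem RelCountablyCompact.isBounded {M : Type*} [PseudoMetricSpace M] {K : Set M}
    (hK : RelCountablyCompact K) : Bornology.IsBounded K := by
  rcases K.eq_empty_or_nonempty with rfl | ⟨c, -⟩
  · exact Bornology.isBounded_empty
  by_contra hunb
  have hfar : ∀ n : ℕ, ∃ x ∈ K, (n : ℝ) < dist x c := fun n => by
    simpa [subset_def] using mt isBounded_closedBall.subset hunb
  choose u hu hfar using hfar
  obtain ⟨x, hx⟩ := hK u hu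
  have hescape : Tendsto (fun n => dist (u n) c) atTop atTop :=
    tendsto_atTop_mono (fun n => (hfar n).le) tendsto_natCast_atTop_atTop
  obtain ⟨n, hnear, hn⟩ := ((hx.frequently (ball_mem_nhds x one_pos)).and_eventually
    (hescape.eventually_ge_atTop (dist x c + 1))).exists
  linarith [dist_triangle (u n) x c, mem_ball.1 hnear]

theorem IsCompact.exists_tendsto_subseq_of_separating (hK : IsCompact K) (g : ℕ → X → ℝ)
    (hg : ∀ n, Continuous (g n)) (hsep : ∀ x ∈ K, ∀ y ∈ K, (∀ n, g n x = g n y) → x = y)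
    {u : ℕ → X} (hu : ∀ n, u n ∈ K) :
    ∃ x ∈ K, ∃ φ : ℕ → ℕ, StrictMono φ ∧ Tendsto (u ∘ φ) atTop (𝓝 x) := by
  have := isCompact_iff_compactSpace.1 hK
  have : TopologicalSpace.MetrizableSpace K :=
    Metric.PiNatEmbed.TopologicalSpace.MetrizableSpace.of_countable_separating
      (fun n (x : K) => g n x) (fun n => (hg n).comp continuous_subtype_val)
      fun x y hxy => by
        by_contra! h
        exact hxy (Subtype.ext (hsep x x.2 y y.2 h))
  obtain ⟨x, φ, hφ, hx⟩ := CompactSpace.tendsto_subseq fun n => (⟨u n, hu n⟩ : K)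
  exact ⟨x, x.2, φ, hφ, (continuous_subtype_val.tendsto x).comp hx⟩

end Topology

section Dual

variable {𝕜 W : Type*} [RCLike 𝕜] [NormedAddCommGroup W] [NormedSpace 𝕜 W]

theorem isBounded_of_forall_dual_isBounded {s : Set W}
    (h : ∀ f : StrongDual 𝕜 W, Bornology.IsBounded (f '' s)) : Bornology.IsBounded s := by
  have hpt (f : StrongDual 𝕜 W) : ∃ C, ∀ x : s, ‖inclusionInDoubleDual 𝕜 W x f‖ ≤ C := by
    obtain ⟨C, hC⟩ := isBounded_iff_forall_norm_le.1 (h f)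
    exact ⟨C, fun x => hC _ (mem_image_of_mem f x.2)⟩
  obtain ⟨C, hC⟩ := banach_steinhaus hpt
  refine isBounded_iff_forall_norm_le.2 ⟨C, fun x hx => ?_⟩
  rw [← (inclusionInDoubleDualLi 𝕜).norm_map x]
  exact hC ⟨x, hx⟩

theorem TopologicalSpace.IsSeparable.exists_separating_seq_dual {s : Set W}
    (hs : TopologicalSpace.IsSeparable s) :
    ∃ F : ℕ → StrongDual 𝕜 W, ∀ x ∈ s, (∀ n, F n x = 0) → x = 0 := by
  obtain ⟨c, hc, hsc⟩ := hs
  obtain ⟨d, hd⟩ := (hc.insert 0).exists_eq_range (insert_nonempty 0 c)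
  choose F hF1 hFd using fun n => exists_dual_vector'' 𝕜 (d n)
  refine ⟨F, fun x hx hFx => ?_⟩
  by_contra hx0
  obtain ⟨_, ⟨n, rfl⟩, hxd⟩ := Metric.mem_closure_iff.1
    (closure_mono ((subset_insert 0 c).trans hd.le) (hsc hx)) (‖x‖ / 2)
    (half_pos (norm_pos_iff.2 hx0))
  have hdx : ‖d n‖ ≤ ‖x - d n‖ := calc
    ‖d n‖ = ‖F n (x - d n)‖ := by simp [hFd, hFx n]
    _ ≤ ‖F n‖ * ‖x - d n‖ := (F n).le_opNorm _
    _ ≤ ‖x - d n‖ := mul_le_of_le_one_left (norm_nonneg _) (hF1 n)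
  rw [dist_eq_norm] at hxd
  linarith [norm_le_norm_sub_add x (d n)]

theorem exists_finset_norming_of_finiteDimensional (V : Submodule 𝕜 (StrongDual 𝕜 W))
    [FiniteDimensional 𝕜 V] :
    ∃ T : Finset W, (∀ f ∈ T, ‖f‖ ≤ 1) ∧ ∀ y ∈ V, ∃ f ∈ T, ‖y‖ ≤ 2 * ‖y f‖ := by
  have hcover : sphere (0 : V) 1 ⊆
      ⋃ f ∈ closedBall (0 : W) 1, {v : V | 1 < 2 * ‖(v : StrongDual 𝕜 W) f‖} := by
    intro v hv
    have hv1 : ‖(v : StrongDual 𝕜 W)‖ = 1 := mem_sphere_zero_iff_norm.1 hv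
    obtain ⟨f, hf, hvf⟩ :=
      (v : StrongDual 𝕜 W).exists_lt_apply_of_lt_opNorm (r := 1 / 2) (by rw [hv1]; norm_num)
    exact mem_biUnion (mem_closedBall_zero_iff.2 hf.le)
      (show 1 < 2 * ‖(v : StrongDual 𝕜 W) f‖ by linarith)
  obtain ⟨T, hT, hTfin, hTcover⟩ := (isCompact_sphere (0 : V) 1).elim_finite_subcover_image
    (fun f _ => isOpen_lt continuous_const (by fun_prop)) hcover
  classical
  refine ⟨insert 0 hTfin.toFinset, ?_, fun y hy => ?_⟩
  · simp only [Finset.mem_insert, Set.Finite.mem_toFinset]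
    rintro f (rfl | hf)
    · simp
    · exact mem_closedBall_zero_iff.1 (hT hf)
  rcases eq_or_ne y 0 with rfl | hy0
  · exact ⟨0, Finset.mem_insert_self _ _, by simp⟩
  have hnorm : 0 < ‖y‖ := norm_pos_iff.2 hy0
  have hunit : ((‖y‖⁻¹ : 𝕜) • ⟨y, hy⟩ : V) ∈ sphere (0 : V) 1 := by
    refine mem_sphere_zero_iff_norm (E := V) |>.2 ?_
    change ‖(‖y‖⁻¹ : 𝕜) • y‖ = 1
    rw [norm_smul, norm_inv, RCLike.norm_ofReal, abs_norm]
    exact inv_mul_cancel₀ hnorm.ne'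
  obtain ⟨f, hf, hyf⟩ := mem_iUnion₂.1 (hTcover hunit)
  refine ⟨f, Finset.mem_insert_of_mem (hTfin.mem_toFinset.2 hf), ?_⟩
  have : 1 < 2 * (‖y‖⁻¹ * ‖y f‖) := by simpa [norm_smul] using hyf
  field_simp at this
  exact this.le

theorem eq_zero_of_mem_closure_of_forall_norming {F : Set W} (hF : ∀ f ∈ F, ‖f‖ ≤ 1)
    {N : Set (StrongDual 𝕜 W)} (hN : ∀ y ∈ N, ∃ f ∈ F, ‖y‖ ≤ 2 * ‖y f‖) {z : StrongDual 𝕜 W}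
    (hz : z ∈ closure N) (hzF : ∀ f ∈ F, z f = 0) : z = 0 := by
  refine norm_le_zero_iff.1 (le_of_forall_pos_le_add fun ε hε => ?_)
  obtain ⟨y, hyN, hzy⟩ := Metric.mem_closure_iff.1 hz (ε / 3) (by positivity)
  obtain ⟨f, hfF, hyf⟩ := hN y hyN
  have hyf' : ‖y f‖ ≤ ‖z - y‖ := calc
    ‖y f‖ = ‖(z - y) f‖ := by simp [hzF f hfF]
    _ ≤ ‖z - y‖ * ‖f‖ := (z - y).le_opNorm f
    _ ≤ ‖z - y‖ := mul_le_of_le_one_right (norm_nonneg _) (hF f hfF)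
  rw [dist_eq_norm] at hzy
  linarith [norm_le_norm_sub_add z y]

end Dual

section Construction

variable {W X : Type*} [DecidableEq W] [DecidableEq X]

/-- Whitley's construction of the pairs `(Tₙ, Vₙ)`; in the application `sel T n` is
`1/(n+1)`-close to `x` on `T`, and `Φ V` norms `span V`. -/
def normingChain (sel : Finset W → ℕ → X) (Φ : Finset X → Finset W) (x : X) :
    ℕ → Finset W × Finset X
  | 0 => (Φ {x}, {x})
  | n + 1 =>
    let V := insert (sel (normingChain sel Φ x n).1 n) (normingChain sel Φ x n).2
    ((normingChain sel Φ x n).1 ∪ Φ V, V)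

namespace normingChain

variable (sel : Finset W → ℕ → X) (Φ : Finset X → Finset W) (x : X)

theorem monotone_fst : Monotone fun n => (normingChain sel Φ x n).1 :=
  monotone_nat_of_le_succ fun _ => Finset.subset_union_left

theorem monotone_snd : Monotone fun n => (normingChain sel Φ x n).2 :=
  monotone_nat_of_le_succ fun _ => Finset.subset_insert _ _

theorem norming_snd_subset_fst (n : ℕ) :
    Φ (normingChain sel Φ x n).2 ⊆ (normingChain sel Φ x n).1 := by
  cases n
  · exact Finset.Subset.rfl
  · exact Finset.subset_union_right

theorem exists_norming_mem_of_mem_fst {n : ℕ} {f : W} (hf : f ∈ (normingChain sel Φ x n).1) :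
    ∃ V, f ∈ Φ V := by
  induction n with
  | zero => exact ⟨_, hf⟩
  | succ n ih =>
    rcases Finset.mem_union.1 hf with hf | hf
    · exact ih hf
    · exact ⟨_, hf⟩

theorem mem_snd_zero : x ∈ (normingChain sel Φ x 0).2 := Finset.mem_singleton_self x

theorem sel_mem_snd_succ (n : ℕ) :
    sel (normingChain sel Φ x n).1 n ∈ (normingChain sel Φ x (n + 1)).2 :=
  Finset.mem_insert_self _ _

end normingChain

end Construction

section Whitley

variable {𝕜 W : Type*} [RCLike 𝕜] [NormedAddCommGroup W] [NormedSpace 𝕜 W]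

theorem WeakDual.exists_forall_dist_lt_of_mem_closure {S : Set (WeakDual 𝕜 W)} {x : WeakDual 𝕜 W}
    (hx : x ∈ closure S) (T : Finset W) {ε : ℝ} (hε : 0 < ε) :
    ∃ s ∈ S, ∀ f ∈ T, dist (s f) (x f) < ε := by
  have hU : ⋂ f ∈ T, (fun z : WeakDual 𝕜 W => z f) ⁻¹' ball (x f) ε ∈ 𝓝 x :=
    (biInter_finset_mem T).2 fun f _ =>
      (WeakDual.eval_continuous f).continuousAt (ball_mem_nhds _ hε)
  obtain ⟨s, hsU, hsS⟩ := mem_closure_iff_nhds.1 hx _ hU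
  exact ⟨s, hsS, fun f hf => mem_iInter₂.1 hsU f hf⟩

theorem exists_seq_tendsto_and_norming {α : Type*} (φ : α → StrongDual 𝕜 W) (S : Set α)
    (x : StrongDual 𝕜 W)
    (hS : ∀ (T : Finset W) (ε : ℝ), 0 < ε → ∃ a ∈ S, ∀ f ∈ T, dist (φ a f) (x f) < ε) :
    ∃ (a : ℕ → α) (F : Set W), (∀ n, a n ∈ S) ∧ (∀ f ∈ F, ‖f‖ ≤ 1) ∧
      (∀ f ∈ F, Tendsto (fun n => φ (a n) f) atTop (𝓝 (x f))) ∧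
      ∀ y ∈ span 𝕜 (insert x (range (φ ∘ a))), ∃ f ∈ F, ‖y‖ ≤ 2 * ‖y f‖ := by
  classical
  choose sel hselS hsel using fun (T : Finset W) (n : ℕ) =>
    hS T (1 / (n + 1)) Nat.one_div_pos_of_nat
  choose Φ hΦ1 hΦ using fun V : Finset (StrongDual 𝕜 W) =>
    exists_finset_norming_of_finiteDimensional (span 𝕜 (V : Set (StrongDual 𝕜 W)))
  set c := normingChain (fun T n => φ (sel T n)) Φ x
  refine ⟨fun n => sel (c n).1 n, ⋃ n, ((c n).1 : Set W), fun n => hselS _ _, ?_, ?_, ?_⟩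
  · simp only [mem_iUnion, Finset.mem_coe, forall_exists_index]
    intro f n hf
    obtain ⟨V, hV⟩ := normingChain.exists_norming_mem_of_mem_fst _ _ _ hf
    exact hΦ1 V f hV
  · simp only [mem_iUnion, Finset.mem_coe, forall_exists_index]
    intro f m hf
    refine tendsto_iff_dist_tendsto_zero.2 <|
      squeeze_zero' (Eventually.of_forall fun _ => dist_nonneg)
        (eventually_atTop.2 ⟨m, fun n hn => (hsel _ n f ?_).le⟩)
        tendsto_one_div_add_atTop_nhds_zero_nat
    exact normingChain.monotone_fst _ _ _ hn hf
  · intro y hy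
    have hsub : insert x (range (φ ∘ fun n => sel (c n).1 n)) ⊆ ⋃ n, ((c n).2 : Set _) := by
      rintro _ (rfl | ⟨n, rfl⟩)
      · exact mem_iUnion.2 ⟨0, normingChain.mem_snd_zero _ _ _⟩
      · exact mem_iUnion.2 ⟨n + 1, normingChain.sel_mem_snd_succ _ _ _ n⟩
    have hdir : Directed (· ≤ ·) fun n => span 𝕜 ((c n).2 : Set (StrongDual 𝕜 W)) :=
      (Monotone.directed_le fun m n hmn => span_mono (Finset.coe_subset.2
        (normingChain.monotone_snd _ _ _ hmn)))
    have hy' : y ∈ ⨆ n, span 𝕜 ((c n).2 : Set (StrongDual 𝕜 W)) := by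
      rw [← span_iUnion]
      exact span_mono hsub hy
    obtain ⟨n, hn⟩ := (mem_iSup_of_directed _ hdir).1 hy'
    obtain ⟨f, hf, hyf⟩ := hΦ _ y hn
    exact ⟨f, mem_iUnion.2 ⟨n, normingChain.norming_snd_subset_fst _ _ _ n hf⟩, hyf⟩

end Whitley

namespace WeakSpace

variable {E : Type*} [NormedAddCommGroup E] [NormedSpace ℝ E]

theorem continuous_dual_apply (f : StrongDual ℝ E) :
    Continuous fun x : WeakSpace ℝ E => f ((toWeakSpace ℝ E).symm x) :=
  WeakBilin.eval_continuous _ f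

theorem symm_mem_topologicalClosure_span {s : Set (WeakSpace ℝ E)} {x : WeakSpace ℝ E}
    (hx : x ∈ closure s) :
    (toWeakSpace ℝ E).symm x ∈ (span ℝ ((toWeakSpace ℝ E).symm '' s)).topologicalClosure := by
  set M := span ℝ ((toWeakSpace ℝ E).symm '' s)
  have hs : s ⊆ toWeakSpace ℝ E '' M := fun y hy =>
    ⟨_, subset_span (mem_image_of_mem _ hy), (toWeakSpace ℝ E).apply_symm_apply y⟩
  obtain ⟨v, hv, rfl⟩ : x ∈ toWeakSpace ℝ E '' closure M := by
    rw [M.convex.toWeakSpace_closure ℝ]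
    exact closure_mono hs hx
  simpa [← SetLike.mem_coe, topologicalClosure_coe] using hv

theorem relSeqCompact_of_isCompact_closure {A : Set (WeakSpace ℝ E)}
    (hA : IsCompact (closure A)) : RelSeqCompact A := by
  intro u hu
  set S := (span ℝ ((toWeakSpace ℝ E).symm '' range u)).topologicalClosure
  have hS : TopologicalSpace.IsSeparable (S : Set E) := by
    rw [topologicalClosure_coe]
    exact ((countable_range u).image _).isSeparable.span.closure
  obtain ⟨F, hF⟩ := hS.exists_separating_seq_dual (𝕜 := ℝ)
  have hK : IsCompact (closure (range u)) :=
    hA.of_isClosed_subset isClosed_closure (closure_mono (range_subset_iff.2 hu))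
  have hsep : ∀ x ∈ closure (range u), ∀ y ∈ closure (range u),
      (∀ n, F n ((toWeakSpace ℝ E).symm x) = F n ((toWeakSpace ℝ E).symm y)) → x = y := by
    intro x hx y hy hxy
    have hxyS := S.sub_mem (symm_mem_topologicalClosure_span hx)
      (symm_mem_topologicalClosure_span hy)
    have := hF _ hxyS fun n => by rw [map_sub, hxy n, sub_self]
    exact (toWeakSpace ℝ E).symm.injective (sub_eq_zero.1 this)
  obtain ⟨x, -, φ, hφ, hx⟩ := hK.exists_tendsto_subseq_of_separating _
    (fun n => continuous_dual_apply (F n)) hsep fun n => subset_closure (mem_range_self n)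
  exact ⟨x, φ, hφ, hx⟩

theorem isBounded_preimage_of_relCountablyCompact {A : Set (WeakSpace ℝ E)}
    (hA : RelCountablyCompact A) : Bornology.IsBounded (toWeakSpace ℝ E ⁻¹' A) := by
  refine isBounded_of_forall_dual_isBounded (𝕜 := ℝ) fun f => ?_
  rw [← LinearEquiv.image_symm_eq_preimage, image_image]
  exact (hA.image (continuous_dual_apply f)).isBounded

theorem inclusionInDoubleDual_symm_mem_topologicalClosure_span {s : Set (WeakSpace ℝ E)}
    {x : WeakSpace ℝ E} (hx : x ∈ closure s) :
    inclusionInDoubleDual ℝ E ((toWeakSpace ℝ E).symm x) ∈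
      (span ℝ ((fun y => inclusionInDoubleDual ℝ E ((toWeakSpace ℝ E).symm y)) '' s)
        ).topologicalClosure := by
  have hx' := symm_mem_topologicalClosure_span hx
  rw [← SetLike.mem_coe, topologicalClosure_coe] at hx' ⊢
  refine map_mem_closure (inclusionInDoubleDual ℝ E).continuous hx' fun v hv => ?_
  rw [SetLike.mem_coe, ← image_image (inclusionInDoubleDual ℝ E)]
  exact image_span_subset_span (inclusionInDoubleDual ℝ E).toLinearMap _ (mem_image_of_mem _ hv)

theorem closure_image_subset_range_of_relCountablyCompact {A : Set (WeakSpace ℝ E)}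
    (hA : RelCountablyCompact A) :
    closure (inclusionInDoubleDualWeak ℝ E '' A) ⊆ range (inclusionInDoubleDualWeak ℝ E) := by
  intro x hx
  set φ := fun y : WeakSpace ℝ E => inclusionInDoubleDual ℝ E ((toWeakSpace ℝ E).symm y)
  set x' := WeakDual.toStrongDual x
  obtain ⟨a, F, haA, hF1, hFx, hFN⟩ := exists_seq_tendsto_and_norming φ A x' fun T ε hε => by
    obtain ⟨_, ⟨a, ha, rfl⟩, h⟩ := WeakDual.exists_forall_dist_lt_of_mem_closure hx T hε
    exact ⟨a, ha, h⟩
  obtain ⟨w, hw⟩ := hA a haA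
  set N := span ℝ (insert x' (range (φ ∘ a)))
  have hwF (f : StrongDual ℝ E) (hf : f ∈ F) : φ w f = x' f :=
    eq_of_nhds_neBot ((hw.continuousAt_comp (continuous_dual_apply f).continuousAt).clusterPt.mono
      (hFx f hf))
  have hwN : φ w ∈ N.topologicalClosure :=
    topologicalClosure_mono (span_mono (range_comp φ a ▸ subset_insert _ _))
      (inclusionInDoubleDual_symm_mem_topologicalClosure_span (isClosed_closure.mem_of_mapClusterPt
        hw (Eventually.of_forall fun n => subset_closure (mem_range_self n))))
  have hz : x' - φ w ∈ N.topologicalClosure :=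
    sub_mem (N.le_topologicalClosure (subset_span (mem_insert _ _))) hwN
  rw [← SetLike.mem_coe, topologicalClosure_coe] at hz
  have hxw := eq_zero_of_mem_closure_of_forall_norming hF1 hFN hz fun f hf =>
    sub_eq_zero.2 (hwF f hf).symm
  exact ⟨w, ContinuousLinearMap.ext fun f => congr($(sub_eq_zero.1 hxw) f).symm⟩

theorem isCompact_closure_of_relCountablyCompact {A : Set (WeakSpace ℝ E)}
    (hA : RelCountablyCompact A) : IsCompact (closure A) :=
  isCompact_closure_of_isBounded ℝ E A (isBounded_preimage_of_relCountablyCompact hA)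
    (closure_image_subset_range_of_relCountablyCompact hA)

end WeakSpace

theorem eberlein_smulian_general (E : Type u) [NormedAddCommGroup E] [NormedSpace ℝ E]
    (A : Set (WeakSpace ℝ E)) :
    List.TFAE [IsCompact (closure A), RelSeqCompact A, RelCountablyCompact A] := by
  tfae_have 1 → 2 := WeakSpace.relSeqCompact_of_isCompact_closure
  tfae_have 2 → 3 := RelSeqCompact.relCountablyCompact
  tfae_have 3 → 1 := WeakSpace.isCompact_closure_of_relCountablyCompact
  tfae_finish

/-- Eberlein–Šmulian: for a subset A of a Banach space E with its weak topology,
relative compactness, relative sequential compactness and relative countable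
compactness coincide. -/
theorem eberlein_smulian (E : Type u) [NormedAddCommGroup E] [NormedSpace ℝ E]
    [CompleteSpace E] (A : Set (WeakSpace ℝ E)) :
    List.TFAE [IsCompact (closure A), RelSeqCompact A, RelCountablyCompact A] :=
  eberlein_smulian_general E A
end

section
/- Let X be a subspace of a Dieudonné complete space Y such that for every point y ∈ Y \ X there exists a Gδ-set V in Y with y ∈ V and V ⊆ Y \ X. Then X is Dieudonné complete. -/
open Filter Topology Set

universe u v

/-- A space is Dieudonné complete if it embeds as a closed subspace of a
product of metric spaces. -/
def DieudonneComplete (X : Type u) [TopologicalSpace X] : Prop :=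
  ∃ (ι : Type u) (M : ι → Type u) (m : ∀ i, MetricSpace (M i)) (f : X → ∀ i, M i),
    letI : ∀ i, TopologicalSpace (M i) := fun i => (m i).toUniformSpace.toTopologicalSpace
    Topology.IsClosedEmbedding f
/-! A point `w ∉ X` lies in a Gδ-set disjoint from `X`, which in a completely regular space
contains a zero set through `w`. So `X` is an intersection of cozero sets `{φ_w ≠ 0}`, and
`x ↦ (x, (1 / φ_w x)_w)` identifies `X` with the closed subset `{(y, t) | ∀ w, φ_w y * t_w = 1}`
of `Y × ℝ^(Xᶜ)`, which is Dieudonné complete. -/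

lemma exists_continuous_zero_preimage_subset_of_isGδ {Y : Type*} [TopologicalSpace Y]
    [CompletelyRegularSpace Y] {V : Set Y} (hV : IsGδ V) {y : Y} (hy : y ∈ V) :
    ∃ φ : Y → ℝ, Continuous φ ∧ φ y = 0 ∧ φ ⁻¹' {0} ⊆ V := by
  obtain ⟨U, hU, rfl⟩ := hV.eq_iInter_nat
  have hyU : ∀ n, y ∉ (U n)ᶜ := fun n hn => hn (mem_iInter.1 hy n)
  choose g hg hgy hgU using fun n =>
    CompletelyRegularSpace.completely_regular y (U n)ᶜ (hU n).isClosed_compl (hyU n)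
  set term : ℕ → Y → ℝ := fun n z => (g n z : ℝ) * (1 / 2) ^ n
  have term_nonneg : ∀ n z, 0 ≤ term n z := fun n z => by
    have := (g n z).2.1
    positivity
  have norm_term_le : ∀ n z, ‖term n z‖ ≤ (1 / 2 : ℝ) ^ n := fun n z => by
    rw [Real.norm_of_nonneg (term_nonneg n z)]
    exact mul_le_of_le_one_left (by positivity) (g n z).2.2
  have hsum : Summable fun n => (1 / 2 : ℝ) ^ n :=
    summable_geometric_of_lt_one (by norm_num) (by norm_num)
  refine ⟨fun z => ∑' n, term n z,
    continuous_tsum (fun n => (continuous_subtype_val.comp (hg n)).mul continuous_const)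
      hsum norm_term_le, by simp [term, hgy], fun z hz => mem_iInter.2 fun n => ?_⟩
  by_contra hzU
  have hle : term n z ≤ ∑' n, term n z :=
    (hsum.of_norm_bounded (norm_term_le · z)).le_tsum n fun k _ => term_nonneg k z
  have hterm : term n z = (1 / 2) ^ n := by simp [term, hgU n hzU]
  rw [hterm, show ∑' n, term n z = 0 from hz] at hle
  exact (pow_pos (by norm_num : (0 : ℝ) < 1 / 2) n).not_ge hle

namespace DieudonneComplete

lemma of_isClosedEmbedding {X Y : Type u} [TopologicalSpace X] [TopologicalSpace Y]
    (hY : DieudonneComplete Y) {f : X → Y} (hf : IsClosedEmbedding f) :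
    DieudonneComplete X := by
  obtain ⟨ι, M, m, g, hg⟩ := hY
  exact ⟨ι, M, m, g ∘ f, hg.comp hf⟩

lemma pi_metricSpace {ι : Type u} (M : ι → Type u) [∀ i, MetricSpace (M i)] :
    DieudonneComplete (∀ i, M i) :=
  ⟨ι, M, inferInstance, id, .id⟩

lemma pi_real (ι : Type u) : DieudonneComplete (ι → ℝ) :=
  (pi_metricSpace fun _ : ι => ULift.{u} ℝ).of_isClosedEmbedding
    (Homeomorph.piCongrRight fun _ => Homeomorph.ulift.symm).isClosedEmbedding

lemma prod {X Y : Type u} [TopologicalSpace X] [TopologicalSpace Y]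
    (hX : DieudonneComplete X) (hY : DieudonneComplete Y) : DieudonneComplete (X × Y) := by
  obtain ⟨ι, M, m, f, hf⟩ := hX
  obtain ⟨κ, N, n, g, hg⟩ := hY
  let _ : ∀ i, MetricSpace (M i) := m
  let _ : ∀ k, MetricSpace (N k) := n
  let _ : ∀ j, MetricSpace (Sum.elim M N j) := Sum.rec m n
  exact ⟨ι ⊕ κ, Sum.elim M N, inferInstance, _,
    (Homeomorph.sumPiEquivProdPi ι κ _).symm.isClosedEmbedding.comp (hf.prodMap hg)⟩

end DieudonneComplete

lemma isClosedEmbedding_inv_graph {Y ι : Type*} [TopologicalSpace Y] {φ : ι → Y → ℝ}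
    (hφ : ∀ i, Continuous (φ i)) {X : Set Y} (hX : X = {y | ∀ i, φ i y ≠ 0}) :
    IsClosedEmbedding fun x : X => ((x : Y), fun i => (φ i x)⁻¹) := by
  subst hX
  have hcont : Continuous fun x : {y | ∀ i, φ i y ≠ 0} => ((x : Y), fun i => (φ i x)⁻¹) :=
    continuous_subtype_val.prodMk <| continuous_pi fun i =>
      ((hφ i).comp continuous_subtype_val).inv₀ fun x => x.2 i
  refine ⟨.of_comp hcont continuous_fst .subtypeVal, ?_⟩
  have hrange : range (fun x : {y | ∀ i, φ i y ≠ 0} => ((x : Y), fun i => (φ i x)⁻¹)) =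
      ⋂ i, {p : Y × (ι → ℝ) | φ i p.1 * p.2 i = 1} := by
    ext ⟨y, t⟩
    simp only [mem_range, mem_iInter, mem_ofPred_eq, Prod.mk.injEq, Subtype.exists]
    constructor
    · rintro ⟨y, hy, rfl, rfl⟩ i
      exact mul_inv_cancel₀ (hy i)
    · intro h
      have hy : ∀ i, φ i y ≠ 0 := fun i h0 => by simpa [h0] using h i
      exact ⟨y, hy, rfl, funext fun i => inv_eq_of_mul_eq_one_right (h i)⟩
  rw [hrange]
  exact isClosed_iInter fun i =>
    isClosed_eq (((hφ i).comp continuous_fst).mul ((continuous_apply i).comp continuous_snd))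
      continuous_const

/-- A subspace of a Dieudonné complete space whose complement is a union of
Gδ-sets is Dieudonné complete. -/
theorem dieudonneComplete_of_gdelta_complement (Y : Type u) [TopologicalSpace Y]
    [T35Space Y] (hY : DieudonneComplete Y) (X : Set Y)
    (hGdelta : ∀ y ∈ Xᶜ, ∃ V : Set Y, IsGδ V ∧ y ∈ V ∧ V ⊆ Xᶜ) :
    DieudonneComplete X := by
  have hzero : ∀ w : ↥Xᶜ, ∃ φ : Y → ℝ, Continuous φ ∧ φ w = 0 ∧ φ ⁻¹' {0} ⊆ Xᶜ := by
    rintro ⟨y, hy⟩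
    obtain ⟨V, hV, hyV, hVX⟩ := hGdelta y hy
    obtain ⟨φ, hφ, hφy, hφV⟩ := exists_continuous_zero_preimage_subset_of_isGδ hV hyV
    exact ⟨φ, hφ, hφy, hφV.trans hVX⟩
  choose φ hφ hφw hφX using hzero
  have hX : X = {y | ∀ w, φ w y ≠ 0} := by
    ext y
    refine ⟨fun hy w h0 => hφX w h0 hy, fun hy => ?_⟩
    by_contra hyX
    exact hy ⟨y, hyX⟩ (hφw ⟨y, hyX⟩)
  exact (hY.prod (.pi_real _)).of_isClosedEmbedding (isClosedEmbedding_inv_graph hφ hX)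
end

section
/- Let X be a Tychonoff space, λ a bornology on X with a closed base, and (Y,ρ) a metric space. If X is a λ_f-space, then C_{λ,ρ}(X,Y) is Dieudonné complete. -/
open Filter Topology Set

universe u v

/-- A bornology (family of nonempty sets covering X, closed under finite unions and
nonempty subsets) which is moreover closed under taking closures (has a closed base). -/
def IsBornologyWithClosedBase {X : Type u} [TopologicalSpace X] (L : Set (Set X)) : Prop :=
  (∀ A ∈ L, A.Nonempty) ∧ (⋃₀ L = univ) ∧ (∀ A ∈ L, ∀ B ∈ L, A ∪ B ∈ L) ∧
    (∀ A ∈ L, ∀ B : Set X, B.Nonempty → B ⊆ A → B ∈ L) ∧ (∀ A ∈ L, closure A ∈ L)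

/-- X is a λ_f-space: a map to any Tychonoff space is continuous iff its restriction to
the closure of each member of L is continuous. -/
def IsLambdaFSpace (X : Type u) [TopologicalSpace X] (L : Set (Set X)) : Prop :=
  ∀ (Z : Type v) (tZ : TopologicalSpace Z), @T35Space Z tZ →
    ∀ f : X → Z, @Continuous X Z _ tZ f ↔ ∀ A ∈ L, @ContinuousOn X Z _ tZ f (closure A)

/-- C_{λ,ρ}(X,Y): the continuous maps from X to the metric space Y, carrying the
uniformity (hence topology) of uniform convergence on members of L. -/
def CL (X : Type u) [TopologicalSpace X] (Y : Type v) [MetricSpace Y]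
    (L : Set (Set X)) : Type (max u v) := C(X, Y)

noncomputable instance CL.instUniformSpace (X : Type u) [TopologicalSpace X] (Y : Type v)
    [MetricSpace Y] (L : Set (Set X)) : UniformSpace (CL X Y L) :=
  UniformSpace.comap (fun f => UniformOnFun.ofFun L (⇑(show C(X,Y) from f)))
    (UniformOnFun.uniformSpace X Y L)

/-!
Restriction to the members of `L` embeds `C_L(X, Y)` uniformly into `∏ A ∈ L, (A →ᵤ Y)`, and each
factor is metrizable since uniform convergence into a metric space has a countable base. The
range is closed: a limit of restrictions is a compatible family, which glues to a function on `X`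
because `L` covers `X`. On the closure of each `A ∈ L` (itself in `L`) this function is a uniform
limit of continuous functions, hence continuous there, so it is continuous by the `λ_f` property.
-/

open UniformConvergence
open scoped Uniformity

instance UniformFun.isCountablyGenerated_uniformity {α β : Type*} [UniformSpace β]
    [IsCountablyGenerated (𝓤 β)] : IsCountablyGenerated (𝓤 (α →ᵤ β)) :=
  let ⟨_, hb⟩ := (𝓤 β).exists_antitone_basis
  (UniformFun.hasBasis_uniformity_of_basis α β hb.toHasBasis).isCountablyGenerated

namespace UniformOnFun

variable {α : Type u} {β : Type v} {𝔖 : Set (Set α)}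

theorem injective_pi_restrict (h𝔖 : ⋃₀ 𝔖 = univ) :
    Function.Injective fun f : α →ᵤ[𝔖] β ↦
      fun s : 𝔖 ↦ UniformFun.ofFun ((s : Set α).domRestrict (toFun 𝔖 f)) := by
  intro f g hfg
  funext x
  obtain ⟨s, hs, hxs⟩ := mem_sUnion.mp (h𝔖.symm ▸ mem_univ x)
  exact congrFun (congrFun hfg ⟨s, hs⟩) ⟨x, hxs⟩

variable [UniformSpace β]

theorem isClosed_setOf_continuous_of_isLambdaFSpace [TopologicalSpace α] [T35Space β]
    (hα : IsLambdaFSpace.{u, v} α 𝔖) (hclosure : ∀ s ∈ 𝔖, closure s ∈ 𝔖) :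
    IsClosed {f : α →ᵤ[𝔖] β | Continuous (toFun 𝔖 f)} := by
  refine isClosed_iff_forall_filter.2 fun f u _ hu huf ↦
    (hα β _ inferInstance _).2 fun s hs ↦ ?_
  rw [← tendsto_id', UniformOnFun.tendsto_iff_tendstoUniformlyOn] at huf
  exact (huf _ (hclosure s hs)).continuousOn <| Eventually.frequently <|
    hu fun _ ↦ Continuous.continuousOn

theorem isClosed_range_pi_restrict [T2Space β] (h𝔖 : ⋃₀ 𝔖 = univ) :
    IsClosed (range fun f : α →ᵤ[𝔖] β ↦
      fun s : 𝔖 ↦ UniformFun.ofFun ((s : Set α).domRestrict (toFun 𝔖 f))) := by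
  refine isClosed_of_closure_subset fun g hg ↦ ?_
  have hcompat : ∀ (s t : 𝔖) (x : α) (hs : x ∈ (s : Set α)) (ht : x ∈ (t : Set α)),
      UniformFun.toFun (g s) ⟨x, hs⟩ = UniformFun.toFun (g t) ⟨x, ht⟩ := by
    intro s t x hs ht
    have hclosed : IsClosed {g : ∀ s : 𝔖, (s : Set α) →ᵤ β |
        UniformFun.toFun (g s) ⟨x, hs⟩ = UniformFun.toFun (g t) ⟨x, ht⟩} :=
      isClosed_eq ((UniformFun.uniformContinuous_eval β _).continuous.comp (continuous_apply s))
        ((UniformFun.uniformContinuous_eval β _).continuous.comp (continuous_apply t))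
    exact hclosed.closure_subset_iff.2 (by rintro _ ⟨f, rfl⟩; rfl) hg
  have hcover : ⋃ s : 𝔖, (s : Set α) = univ := by rwa [← sUnion_eq_iUnion]
  refine ⟨ofFun 𝔖 (liftCover _ (fun s ↦ UniformFun.toFun (g s)) hcompat hcover), ?_⟩
  funext s x
  exact liftCover_coe (hf := hcompat) (hS := hcover) x

theorem isClosedEmbedding_pi_restrict [T2Space β] (h𝔖 : ⋃₀ 𝔖 = univ) :
    IsClosedEmbedding fun f : α →ᵤ[𝔖] β ↦
      fun s : 𝔖 ↦ UniformFun.ofFun ((s : Set α).domRestrict (toFun 𝔖 f)) :=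
  ⟨(IsUniformEmbedding.mk isUniformInducing_pi_restrict (injective_pi_restrict h𝔖)).isEmbedding,
    isClosed_range_pi_restrict h𝔖⟩

end UniformOnFun

namespace CL

variable {X : Type u} [TopologicalSpace X] {Y : Type v} [MetricSpace Y] {L : Set (Set X)}

def toUniformOnFun (f : CL X Y L) : X →ᵤ[L] Y :=
  UniformOnFun.ofFun L (show C(X, Y) from f)

theorem range_toUniformOnFun :
    range (toUniformOnFun : CL X Y L → X →ᵤ[L] Y) =
      {f : X →ᵤ[L] Y | Continuous (UniformOnFun.toFun L f)} :=
  Subset.antisymm (range_subset_iff.2 fun f : C(X, Y) ↦ f.continuous)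
    fun _ hf ↦ ⟨(⟨_, hf⟩ : C(X, Y)), rfl⟩

theorem injective_toUniformOnFun : Function.Injective (toUniformOnFun : CL X Y L → X →ᵤ[L] Y) :=
  fun _ _ hfg ↦ DFunLike.coe_injective (F := C(X, Y)) ((UniformOnFun.ofFun L).injective hfg)

theorem isUniformEmbedding_toUniformOnFun :
    IsUniformEmbedding (toUniformOnFun : CL X Y L → X →ᵤ[L] Y) :=
  ⟨isUniformInducing_iff_uniformSpace.2 rfl, injective_toUniformOnFun⟩

theorem isClosedEmbedding_toUniformOnFun (hX : IsLambdaFSpace.{u, v} X L)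
    (hclosure : ∀ A ∈ L, closure A ∈ L) :
    IsClosedEmbedding (toUniformOnFun : CL X Y L → X →ᵤ[L] Y) := by
  refine ⟨isUniformEmbedding_toUniformOnFun.isEmbedding, ?_⟩
  rw [range_toUniformOnFun]
  exact UniformOnFun.isClosed_setOf_continuous_of_isLambdaFSpace hX hclosure

end CL

theorem dieudonneComplete_CL_of_lambdaF_general (X : Type u) [TopologicalSpace X]
    (Y : Type u) [MetricSpace Y] (L : Set (Set X)) (hL : IsBornologyWithClosedBase L)
    (hX : IsLambdaFSpace.{u, u} X L) :
    DieudonneComplete (CL X Y L) := by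
  obtain ⟨-, hcover, -, -, hclosure⟩ := hL
  exact ⟨L, fun A ↦ (A : Set X) →ᵤ Y, fun _ ↦ UniformSpace.metricSpace _, _,
    (UniformOnFun.isClosedEmbedding_pi_restrict hcover).comp
      (CL.isClosedEmbedding_toUniformOnFun hX hclosure)⟩

/-- If X is a λ_f-space then C_{λ,ρ}(X,Y) is Dieudonné complete. -/
theorem dieudonneComplete_CL_of_lambdaF (X : Type u) [TopologicalSpace X] [T35Space X]
    (Y : Type u) [MetricSpace Y] (L : Set (Set X)) (hL : IsBornologyWithClosedBase L)
    (hX : IsLambdaFSpace.{u, u} X L) :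
    DieudonneComplete (CL X Y L) :=
  dieudonneComplete_CL_of_lambdaF_general X Y L hL hX
end

section
/- Let X be a Tychonoff space, λ a bornology on X with a closed base, and (Y,ρ) a metric space. If X is functionally generated with respect to Y by the family σλ, then C_{λ,ρ}(X,Y) is a μ-space. -/
open Filter Topology Set

universe u v

/-- A subset is (topologically) bounded if every continuous real-valued function
on the space is bounded on it. -/
def IsTopBounded {X : Type u} [TopologicalSpace X] (A : Set X) : Prop :=
  ∀ f : X → ℝ, Continuous f → ∃ M : ℝ, ∀ x ∈ A, |f x| ≤ M

/-- A μ-space: every topologically bounded subset has compact closure. -/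
def MuSpace (X : Type u) [TopologicalSpace X] : Prop :=
  ∀ A : Set X, IsTopBounded A → IsCompact (closure A)

/-- X is functionally generated by the family μ with respect to Y if for every
discontinuous f : X → Y there is A ∈ μ such that f|A extends to no continuous map X → Y. -/
def FunctionallyGenerated (X : Type u) [TopologicalSpace X] (μ : Set (Set X))
    (Y : Type v) [TopologicalSpace Y] : Prop :=
  ∀ f : X → Y, ¬ Continuous f →
    ∃ A ∈ μ, ¬ ∃ g : X → Y, Continuous g ∧ ∀ x ∈ A, g x = f x

/-- σλ: the family of countable unions of members of L. -/
def sigmaFam {X : Type u} (L : Set (Set X)) : Set (Set X) :=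
  {B | ∃ S : ℕ → Set X, (∀ n, S n ∈ L) ∧ B = ⋃ n, S n}

/-!
A topologically bounded set `A` in a uniform space is totally bounded: otherwise it contains a
uniformly separated sequence `uₙ`, and `∑ᶠ n, n • fₙ` with bumps `fₙ` at `uₙ` is a continuous
function unbounded on `A`. Embed `C_{λ,ρ}(X,Y)` uniformly into the complete space of functions
`X → Ŷ` (`Ŷ` the completion of `Y`) with uniform convergence on members of `λ`; the closure of
the image of `A` there is compact, and it remains to see that it contains no new points.
Restricting to countably many members `Bₖ` of `λ` lands in a metrizable space, where a limit
point `p` outside the image would make `1 / dist (· , p)` continuous and unbounded on `A`. So a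
limit `h` takes values in `Y` and agrees on every member of `σλ` with some continuous map;
functional generation then makes `h` continuous.
-/

open scoped Uniformity UniformConvergence SetRel
open UniformSpace

theorem IsTopBounded.closure_image_subset_range {α P : Type*} [TopologicalSpace α]
    [TopologicalSpace P] [TopologicalSpace.MetrizableSpace P] {A : Set α} (hA : IsTopBounded A)
    {φ : α → P} (hφ : Continuous φ) : closure (φ '' A) ⊆ range φ := by
  let _ := TopologicalSpace.metrizableSpaceMetric P
  intro p hp
  by_contra hpφ
  have hpos : ∀ a, 0 < dist (φ a) p := fun a => dist_pos.2 fun h => hpφ ⟨a, h⟩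
  obtain ⟨M, hM⟩ := hA (fun a => (dist (φ a) p)⁻¹)
    ((hφ.dist continuous_const).inv₀ fun a => (hpos a).ne')
  obtain ⟨_, ⟨a, ha, rfl⟩, hpa⟩ := Metric.mem_closure_iff.1 hp (max M 1)⁻¹ (by positivity)
  have : (max M 1)⁻¹ ≤ dist (φ a) p := by
    rw [inv_le_comm₀ (by positivity) (hpos a)]
    exact ((le_abs_self _).trans (hM a ha)).trans (le_max_left _ _)
  linarith [dist_comm p (φ a)]

theorem exists_continuous_eq_one_support_subset {α : Type*} [TopologicalSpace α]
    [CompletelyRegularSpace α] {x : α} {U : Set α} (hU : U ∈ 𝓝 x) :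
    ∃ f : α → ℝ, Continuous f ∧ f x = 1 ∧ Function.support f ⊆ U := by
  obtain ⟨g, hg, hgx, hgU⟩ := CompletelyRegularSpace.completely_regular_isOpen x (interior U)
    isOpen_interior (mem_interior_iff_mem_nhds.2 hU)
  refine ⟨fun y => 1 - g y, continuous_const.sub (continuous_subtype_val.comp hg),
    by simp [hgx], fun y hy => ?_⟩
  by_contra hyU
  exact hy (by simp [hgU fun h => hyU (interior_subset h)])

theorem locallyFinite_ball_of_pairwise_not_mem {α ι : Type*} [UniformSpace α] {W : SetRel α α}
    (hW : W ∈ 𝓤 α) [W.IsSymm] {u : ι → α}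
    (hu : Pairwise fun m n => (u m, u n) ∉ W ○ W ○ W ○ W) :
    LocallyFinite fun n => ball (u n) W := by
  intro x
  refine ⟨ball x W, ball_mem_nhds x hW,
    Subsingleton.finite fun m ⟨y, hym, hyx⟩ n ⟨z, hzn, hzx⟩ => ?_⟩
  by_contra hmn
  exact hu hmn <| SetRel.mem_comp.2 ⟨z, SetRel.mem_comp.2 ⟨x,
    SetRel.mem_comp.2 ⟨y, hym, mem_ball_symmetry.1 hyx⟩, hzx⟩, mem_ball_symmetry.1 hzn⟩

theorem IsTopBounded.totallyBounded {α : Type*} [UniformSpace α] {A : Set α}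
    (hA : IsTopBounded A) : TotallyBounded A := by
  refine totallyBounded_of_forall_isSymm fun V hV _ => ?_
  by_contra! hV_cover
  obtain ⟨W₁, hW₁, _, hW₁V⟩ := comp_symm_mem_uniformity_sets hV
  obtain ⟨W, hW, _, hWW₁⟩ := comp_symm_mem_uniformity_sets hW₁
  have : SetRel.IsRefl W := isRefl_of_mem_uniformity hW
  have hW₄V : W ○ W ○ W ○ W ⊆ V := by
    rw [SetRel.comp_assoc]
    exact (SetRel.comp_subset_comp hWW₁ hWW₁).trans hW₁V
  obtain ⟨u, huA, hu⟩ := exists_seq_of_forall_finset_exists (· ∈ A) (fun x y => y ∉ ball x V)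
    fun s _ => by simpa [not_subset] using hV_cover s s.finite_toSet
  have hsep : Pairwise fun m n => (u m, u n) ∉ W ○ W ○ W ○ W := by
    intro m n hmn hmem
    rcases hmn.lt_or_gt with h | h
    · exact hu m n h (hW₄V hmem)
    · exact hu n m h (mem_ball_symmetry.1 (hW₄V hmem))
  choose f hf hfu hfW using fun n =>
    exists_continuous_eq_one_support_subset (ball_mem_nhds (u n) hW)
  have hfin : LocallyFinite fun (n : ℕ) => Function.support fun a => (n : ℝ) * f n a :=
    (locallyFinite_ball_of_pairwise_not_mem hW hsep).subset fun n =>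
      (Function.support_mul_subset_right _ _).trans (hfW n)
  obtain ⟨M, hM⟩ := hA (fun a => ∑ᶠ n : ℕ, (n : ℝ) * f n a)
    (continuous_finsum (fun n => continuous_const.mul (hf n)) hfin)
  obtain ⟨k, hk⟩ := exists_nat_gt M
  have hvalue : ∑ᶠ n : ℕ, (n : ℝ) * f n (u k) = k := by
    rw [finsum_eq_single _ k fun n hn => ?_, hfu, mul_one]
    have hW₄ : W ⊆ W ○ W ○ W ○ W :=
      SetRel.left_subset_comp.trans (SetRel.left_subset_comp.trans SetRel.left_subset_comp)
    rw [Function.notMem_support.1 fun h => hsep hn (hW₄ (hfW n h)), mul_zero]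
  linarith [(le_abs_self _).trans (hM (u k) (huA k))]

theorem IsUniformInducing.isCompact_closure_of_subset_range {α β : Type*} [UniformSpace α]
    [UniformSpace β] [CompleteSpace β] {ι : α → β} (hι : IsUniformInducing ι) {A : Set α}
    (hA : TotallyBounded A) (hAι : closure (ι '' A) ⊆ range ι) : IsCompact (closure A) := by
  rw [hι.isInducing.closure_eq_preimage_closure_image]
  exact hι.isInducing.isCompact_preimage'
    ((hA.image hι.uniformContinuous).closure.isCompact_of_isClosed isClosed_closure) hAι

namespace CL

variable {X : Type u} [TopologicalSpace X] {Y : Type v} [MetricSpace Y] {L : Set (Set X)}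

def toContinuousMap (g : CL X Y L) : C(X, Y) := g

def toUniformOnFunCompletion (g : CL X Y L) : X →ᵤ[L] Completion Y :=
  UniformOnFun.ofFun L fun x => (g.toContinuousMap x : Completion Y)

theorem isUniformInducing_toUniformOnFunCompletion :
    IsUniformInducing (toUniformOnFunCompletion : CL X Y L → X →ᵤ[L] Completion Y) :=
  (UniformOnFun.postcomp_isUniformInducing (Completion.isUniformInducing_coe Y)).comp
    (f := fun g : CL X Y L => UniformOnFun.ofFun L g.toContinuousMap) ⟨rfl⟩

theorem exists_eqOn_of_mem_closure_image {A : Set (CL X Y L)} (hA : IsTopBounded A)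
    {B : ℕ → Set X} (hB : ∀ k, B k ∈ L) {h : X →ᵤ[L] Completion Y}
    (hh : h ∈ closure (toUniformOnFunCompletion '' A)) :
    ∃ g : CL X Y L, ∀ k, ∀ x ∈ B k,
      (g.toContinuousMap x : Completion Y) = UniformOnFun.toFun L h x := by
  let restrict : (X →ᵤ[L] Completion Y) → ∀ k, (B k →ᵤ Completion Y) :=
    fun h k => UniformFun.ofFun ((B k).domRestrict (UniformOnFun.toFun L h))
  have hrestrict : Continuous restrict :=
    continuous_pi fun k => (UniformOnFun.uniformContinuous_restrict _ _ _ (hB k)).continuous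
  obtain ⟨g, hg⟩ := hA.closure_image_subset_range
      (hrestrict.comp isUniformInducing_toUniformOnFunCompletion.uniformContinuous.continuous) <| by
    rw [Set.image_comp]
    exact image_closure_subset_closure_image hrestrict ⟨h, hh, rfl⟩
  exact ⟨g, fun k x hx => congrFun (congrFun hg k) ⟨x, hx⟩⟩

theorem closure_image_subset_range (hL : ⋃₀ L = univ)
    (hX : FunctionallyGenerated X (sigmaFam L) Y) {A : Set (CL X Y L)} (hA : IsTopBounded A) :
    closure (toUniformOnFunCompletion '' A) ⊆ range toUniformOnFunCompletion := by
  intro h hh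
  have hvalues : ∀ x, ∃ y : Y, (y : Completion Y) = UniformOnFun.toFun L h x := by
    intro x
    obtain ⟨B, hB, hxB⟩ := sUnion_eq_univ_iff.1 hL x
    obtain ⟨g, hg⟩ := exists_eqOn_of_mem_closure_image hA (fun _ => hB) hh
    exact ⟨_, hg 0 x hxB⟩
  choose f hf using hvalues
  have hcont : Continuous f := by
    by_contra hdisc
    obtain ⟨_, ⟨B, hB, rfl⟩, hnoext⟩ := hX f hdisc
    obtain ⟨g, hg⟩ := exists_eqOn_of_mem_closure_image hA hB hh
    refine hnoext ⟨g.toContinuousMap, g.toContinuousMap.continuous, ?_⟩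
    rintro x ⟨_, ⟨k, rfl⟩, hx⟩
    exact Completion.coe_injective Y ((hg k x hx).trans (hf x).symm)
  exact ⟨(⟨f, hcont⟩ : C(X, Y)), funext hf⟩

end CL

theorem muSpace_CL_of_functionallyGenerated_general (X : Type u) [TopologicalSpace X]
    (Y : Type u) [MetricSpace Y] (L : Set (Set X))
    (hL : IsBornologyWithClosedBase L)
    (hX : FunctionallyGenerated X (sigmaFam L) Y) :
    MuSpace (CL X Y L) := fun _ hA =>
  CL.isUniformInducing_toUniformOnFunCompletion.isCompact_closure_of_subset_range
    hA.totallyBounded (CL.closure_image_subset_range hL.2.1 hX hA)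

/-- If X is functionally generated with respect to Y by σλ, then C_{λ,ρ}(X,Y)
is a μ-space. -/
theorem muSpace_CL_of_functionallyGenerated (X : Type u) [TopologicalSpace X]
    [T35Space X] (Y : Type u) [MetricSpace Y] (L : Set (Set X))
    (hL : IsBornologyWithClosedBase L)
    (hX : FunctionallyGenerated X (sigmaFam L) Y) :
    MuSpace (CL X Y L) :=
  muSpace_CL_of_functionallyGenerated_general X Y L hL hX
end

section
/- Let X be the ordinal ω₁ + 1 equipped with the order topology and let f : X → ℝ be the characteristic function of {ω₁} (f(α) = 0 for α < ω₁ and f(ω₁) = 1). Then f is discontinuous, but for every countable subset S of X there exists a continuous function h : X → ℝ such that h restricted to S equals f restricted to S. -/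
open Filter Topology Set

universe u v

/-- The ordinal ω₁ + 1, realized as the set of ordinals ≤ ω₁, equipped with
the order topology. -/
def Omega1Succ : Type 1 := {o : Ordinal.{0} // o ≤ (Cardinal.aleph 1).ord}

noncomputable instance : LinearOrder Omega1Succ :=
  inferInstanceAs (LinearOrder {o : Ordinal.{0} // o ≤ (Cardinal.aleph 1).ord})

noncomputable instance : TopologicalSpace Omega1Succ := Preorder.topology Omega1Succ

/-!
Every `α < ω₁` has a successor `α + 1 < ω₁`, so `(α, ω₁]` is clopen; on the other hand these
intervals shrink to `{ω₁}` without reaching it, so `ω₁` is not isolated and the characteristic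
function of `{ω₁}` is discontinuous. A countable set `S` meets `[0, ω₁)` in a set bounded by some
`β < ω₁` (`ω₁` has uncountable cofinality), and the characteristic function of the clopen set
`(β, ω₁]` agrees with that of `{ω₁}` on `S`.
-/

theorem not_continuous_ite_eq_of_neBot {X : Type*} [TopologicalSpace X] [DecidableEq X] (t : X)
    [(𝓝[≠] t).NeBot] : ¬ Continuous fun x : X => if x = t then (1 : ℝ) else 0 := by
  intro hc
  have hpre : (fun x : X => if x = t then (1 : ℝ) else 0) ⁻¹' Ioi 0 = {t} := by
    ext x
    by_cases hx : x = t <;> simp [hx]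
  exact not_isOpen_singleton t (hpre ▸ isOpen_Ioi.preimage hc)

theorem isClopen_Ioi_of_covBy {X : Type*} [LinearOrder X] [TopologicalSpace X] [OrderTopology X]
    {a b : X} (h : a ⋖ b) : IsClopen (Ioi a) :=
  ⟨h.Ioi_eq ▸ isClosed_Ici, isOpen_Ioi⟩

namespace Omega1Succ

open Cardinal Ordinal

instance : OrderTopology Omega1Succ := ⟨rfl⟩

noncomputable def omega1 : Omega1Succ := ⟨(aleph 1).ord, le_rfl⟩

theorem lt_omega1_of_ne {x : Omega1Succ} (hx : x ≠ omega1) : x < omega1 :=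
  lt_of_le_of_ne x.2 hx

theorem exists_covBy_lt_omega1 {x : Omega1Succ} (hx : x < omega1) : ∃ y, x ⋖ y ∧ y < omega1 :=
  have hsucc : Order.succ x.1 < (aleph 1).ord := (isSuccLimit_ord (aleph0_le_aleph 1)).succ_lt hx
  ⟨⟨_, hsucc.le⟩, ⟨Order.lt_succ x.1, fun _ h₁ h₂ => (Order.covBy_succ x.1).2 h₁ h₂⟩, hsucc⟩

theorem isLUB_Iio_omega1 : IsLUB (Iio omega1) omega1 :=
  Order.isLUB_Iio_iff_isSuccPrelimit.2 fun _ hx =>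
    have ⟨_, hxy, hy⟩ := exists_covBy_lt_omega1 hx.lt
    hx.2 hxy.lt hy

instance : (𝓝[≠] omega1).NeBot :=
  have hne : (Iio omega1).Nonempty := ⟨⟨0, (ord_pos.2 (aleph_pos 1)).le⟩, ord_pos.2 (aleph_pos 1)⟩
  (isLUB_Iio_omega1.nhdsWithin_neBot hne).mono (nhdsWithin_mono _ fun _ hx => ne_of_lt hx)

theorem exists_lt_omega1_forall_le_of_countable {S : Set Omega1Succ} (hS : S.Countable) :
    ∃ b < omega1, ∀ x ∈ S, x ≠ omega1 → x ≤ b := by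
  have : Countable ↥(S ∩ Iio omega1) := (hS.mono inter_subset_left).to_subtype
  have hlt (x : ↥(S ∩ Iio omega1)) : x.1.1 < (aleph 1).ord := x.2.2
  have hsup : ⨆ x : ↥(S ∩ Iio omega1), x.1.1 < (aleph 1).ord :=
    (iSup_lt_omega_one fun x => (hlt x).trans_eq (ord_aleph 1)).trans_eq (ord_aleph 1).symm
  refine ⟨⟨_, hsup.le⟩, hsup, fun x hx hne => ?_⟩
  exact le_ciSup (f := fun x : ↥(S ∩ Iio omega1) => x.1.1)
    ⟨_, forall_mem_range.2 fun y => (hlt y).le⟩ ⟨x, hx, lt_omega1_of_ne hne⟩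

end Omega1Succ

open Omega1Succ in
/-- The characteristic function of {ω₁} on ω₁ + 1 is discontinuous but agrees with a
continuous function on every countable subset. -/
theorem charFun_omega1_discontinuous_but_countably_continuous :
    ¬ Continuous (fun a : Omega1Succ =>
        @ite ℝ (a = ⟨(Cardinal.aleph 1).ord, le_rfl⟩) (LinearOrder.toDecidableEq _ _) (1 : ℝ) 0) ∧
    ∀ S : Set Omega1Succ, S.Countable →
      ∃ h : Omega1Succ → ℝ, Continuous h ∧ ∀ x ∈ S,
        h x = (@ite ℝ (x = ⟨(Cardinal.aleph 1).ord, le_rfl⟩) (LinearOrder.toDecidableEq _ _) (1 : ℝ) 0) := by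
  refine ⟨not_continuous_ite_eq_of_neBot omega1, fun S hS => ?_⟩
  obtain ⟨b, hb, hSb⟩ := exists_lt_omega1_forall_le_of_countable hS
  obtain ⟨c, hbc, -⟩ := exists_covBy_lt_omega1 hb
  refine ⟨(Ioi b).indicator 1, (isClopen_Ioi_of_covBy hbc).continuous_indicator continuous_const,
    fun x hx => ?_⟩
  change _ = if x = omega1 then _ else _
  by_cases hx₁ : x = omega1
  · simp [hx₁, hb]
  · simp [hx₁, hSb x hx hx₁]
end

section
/- Let X be a topological space such that C_p(X), the space of continuous real-valued functions on X with the topology of pointwise convergence, is angelic. Then for every metric space Z the space C_p(X,Z) of continuous Z-valued functions on X with the topology of pointwise convergence is angelic. -/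
open Filter Topology Set

universe u v

/-- An angelic space: every relatively countably compact set has compact closure, and
each point of the closure of such a set is the limit of a sequence from the set. -/
def Angelic (E : Type u) [TopologicalSpace E] : Prop :=
  ∀ K : Set E, RelCountablyCompact K →
    IsCompact (closure K) ∧
      ∀ x ∈ closure K, ∃ u : ℕ → E, (∀ n, u n ∈ K) ∧ Tendsto u atTop (𝓝 x)

/-- C_p(X,Y): the continuous maps with the topology of pointwise convergence. -/
def Cp (X : Type u) [TopologicalSpace X] (Y : Type v) [TopologicalSpace Y] :
    Type (max u v) := C(X, Y)

instance Cp.instTopologicalSpace (X : Type u) [TopologicalSpace X] (Y : Type v)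
    [TopologicalSpace Y] : TopologicalSpace (Cp X Y) :=
  TopologicalSpace.induced (fun f => (⇑(show C(X,Y) from f) : X → Y)) Pi.topologicalSpace

section Aux

variable {X : Type u} [TopologicalSpace X] {Y : Type v} [TopologicalSpace Y]

/-- The coercion of `Cp X Y` into the product `X → Y`. -/
def CpCoe (X : Type u) [TopologicalSpace X] (Y : Type v) [TopologicalSpace Y] :
    Cp X Y → (X → Y) := fun f => (⇑(show C(X,Y) from f) : X → Y)

lemma CpCoe.isInducing : Topology.IsInducing (CpCoe X Y) := ⟨rfl⟩

lemma CpCoe.continuous : Continuous (CpCoe X Y) := CpCoe.isInducing.continuous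

lemma Cp.continuous_eval (x : X) : Continuous (fun f : Cp X Y => CpCoe X Y f x) :=
  (continuous_apply x).comp CpCoe.continuous

/-- Cluster points transfer along continuous maps. -/
lemma MapClusterPt.comp_cont {E F : Type*} [TopologicalSpace E] [TopologicalSpace F]
    {φ : E → F} (hφ : Continuous φ) {u : ℕ → E} {x : E}
    (hx : MapClusterPt x atTop u) : MapClusterPt (φ x) atTop (φ ∘ u) := by
  have h2 : ClusterPt (φ x) (Filter.map φ (Filter.map u atTop)) :=
    ClusterPt.map hx hφ.continuousAt tendsto_map
  simpa only [MapClusterPt, Filter.map_map] using h2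

/-- In a metric space, a set in which every sequence has a cluster point has
compact closure. -/
lemma relCC_closure_isCompact {Z : Type*} [MetricSpace Z] {A : Set Z}
    (hA : ∀ u : ℕ → Z, (∀ n, u n ∈ A) → ∃ z, MapClusterPt z atTop u) :
    IsCompact (closure A) := by
  apply IsSeqCompact.isCompact
  intro a ha
  have hex : ∀ n : ℕ, ∃ b ∈ A, dist (a n) b < 1/(n+1) := fun n =>
    Metric.mem_closure_iff.1 (ha n) _ (by positivity)
  choose b hbA hb using hex
  obtain ⟨z, hz⟩ := hA b hbA
  obtain ⟨ψ, hψ, hzt⟩ := TopologicalSpace.FirstCountableTopology.tendsto_subseq hz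
  refine ⟨z, mem_closure_of_tendsto hzt (Eventually.of_forall fun n => hbA _), ψ, hψ, ?_⟩
  rw [tendsto_iff_dist_tendsto_zero]
  have hle : ∀ n, dist (a (ψ n)) z ≤ 1/(ψ n + 1) + dist (b (ψ n)) z := fun n =>
    (dist_triangle (a (ψ n)) (b (ψ n)) z).trans
      (add_le_add (le_of_lt (hb (ψ n))) le_rfl)
  have h1 : Tendsto (fun n : ℕ => 1/((ψ n : ℝ) + 1) + dist (b (ψ n)) z) atTop (𝓝 0) := by
    have hA1 : Tendsto (fun n : ℕ => 1/((ψ n : ℝ) + 1)) atTop (𝓝 0) := by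
      apply Tendsto.comp (g := fun m : ℕ => 1/((m : ℝ) + 1))
        tendsto_one_div_add_atTop_nhds_zero_nat hψ.tendsto_atTop
    have hA2 : Tendsto (fun n => dist (b (ψ n)) z) atTop (𝓝 0) :=
      tendsto_iff_dist_tendsto_zero.1 hzt
    simpa using hA1.add hA2
  exact squeeze_zero (fun n => dist_nonneg) hle h1

end Aux

section Main

variable {X : Type u} [TopologicalSpace X] {Z : Type v} [MetricSpace Z]

/-- The continuous function `x ↦ dist (f x) (g x)`. -/
def distMap (f g : Cp X Z) : Cp X ℝ :=
  show C(X,ℝ) from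
    ⟨fun x => dist (CpCoe X Z f x) (CpCoe X Z g x),
      ((show C(X,Z) from f).continuous.dist (show C(X,Z) from g).continuous)⟩

lemma CpCoe_distMap (f g : Cp X Z) :
    CpCoe X ℝ (distMap f g) = fun x => dist (CpCoe X Z f x) (CpCoe X Z g x) := rfl

lemma continuous_distMap (g : Cp X Z) : Continuous (fun f : Cp X Z => distMap f g) := by
  apply CpCoe.isInducing.continuous_iff.2
  apply continuous_pi
  intro x
  exact (Cp.continuous_eval x).dist continuous_const

lemma relCC_distMap_image {K : Set (Cp X Z)} (hK : RelCountablyCompact K) (g : Cp X Z) :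
    RelCountablyCompact ((fun f => distMap f g) '' K) := by
  intro u hu
  choose f hfK hf using hu
  obtain ⟨p, hp⟩ := hK f hfK
  refine ⟨distMap p g, ?_⟩
  have := hp.comp_cont (continuous_distMap g)
  have hco : (fun f => distMap f g) ∘ f = u := funext fun n => hf n
  rwa [hco] at this

/-- The constant function as an element of `Cp X Z`. -/
def CpConst (z : Z) : Cp X Z := show C(X,Z) from ContinuousMap.const X z

/-- If C_p(X) is angelic then C_p(X,Z) is angelic for every metric space Z. -/
theorem angelic_Cp_metric (X : Type u) [TopologicalSpace X] (h : Angelic (Cp X ℝ))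
    (Z : Type v) [MetricSpace Z] : Angelic (Cp X Z) := by
  intro K hK
  set ι := CpCoe X Z with hιdef
  have hind : Topology.IsInducing ι := CpCoe.isInducing
  -- the pointwise closure of the image of K in the product space
  set T : Set (X → Z) := closure (ι '' K) with hTdef
  -- every element of T is continuous
  have hTcont : ∀ g ∈ T, Continuous g := by
    intro g hg
    have key : ∀ z : Z, Continuous (fun x => dist (g x) z) := by
      intro z
      -- the map θ_z on the product space
      set θ : (X → Z) → (X → ℝ) := fun u => fun x => dist (u x) z with hθdef
      have hθc : Continuous θ :=
        continuous_pi fun x => (continuous_apply x).dist continuous_const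
      -- image of K under f ↦ dist(f ·, z) in Cp X ℝ
      set K' : Set (Cp X ℝ) := (fun f => distMap f (CpConst z)) '' K with hK'def
      have hK' : RelCountablyCompact K' := relCC_distMap_image hK (CpConst z)
      obtain ⟨hCcomp, -⟩ := h K' hK'
      -- the image of closure K' in ℝ^X is compact hence closed
      have hCimg : IsCompact (CpCoe X ℝ '' closure K') :=
        hCcomp.image CpCoe.continuous
      have hCclosed : IsClosed (CpCoe X ℝ '' closure K') := hCimg.isClosed
      -- θ g belongs to the closure of θ '' (ι '' K)
      have hθg : θ g ∈ closure (θ '' (ι '' K)) := by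
        have := image_closure_subset_closure_image hθc (s := ι '' K)
        exact this ⟨g, hg, rfl⟩
      -- θ '' (ι '' K) ⊆ CpCoe '' closure K'
      have hsub : θ '' (ι '' K) ⊆ CpCoe X ℝ '' closure K' := by
        rintro - ⟨-, ⟨f, hfK, rfl⟩, rfl⟩
        exact ⟨distMap f (CpConst z), subset_closure ⟨f, hfK, rfl⟩, rfl⟩
      have : θ g ∈ CpCoe X ℝ '' closure K' :=
        (closure_minimal hsub hCclosed) hθg
      obtain ⟨q, -, hq⟩ := this
      have hqc : Continuous (CpCoe X ℝ q) := (show C(X,ℝ) from q).continuous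
      rw [hq] at hqc
      exact hqc
    rw [continuous_iff_continuousAt]
    intro x₀
    rw [ContinuousAt, tendsto_iff_dist_tendsto_zero]
    have hc := (key (g x₀)).continuousAt (x := x₀)
    simpa [ContinuousAt, dist_self] using hc
  -- T is compact
  have hTcomp : IsCompact T := by
    have hAx : ∀ x : X, IsCompact (closure ((fun f : Cp X Z => ι f x) '' K)) := by
      intro x
      apply relCC_closure_isCompact
      intro u hu
      choose f hfK hf using hu
      obtain ⟨p, hp⟩ := hK f hfK
      refine ⟨ι p x, ?_⟩
      have := hp.comp_cont (Cp.continuous_eval x)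
      have hco : (fun f : Cp X Z => ι f x) ∘ f = u := funext fun n => hf n
      rwa [hco] at this
    apply IsCompact.of_isClosed_subset
      (isCompact_univ_pi fun x => hAx x) isClosed_closure
    intro g hg x _
    have h1 : g x ∈ closure ((fun u : X → Z => u x) '' (ι '' K)) :=
      image_closure_subset_closure_image (continuous_apply x) ⟨g, hg, rfl⟩
    have h2 : (fun u : X → Z => u x) '' (ι '' K) = (fun f : Cp X Z => ι f x) '' K := by
      rw [image_image]
    rwa [h2] at h1
  have hclK : closure K = ι ⁻¹' T := hind.closure_eq_preimage_closure_image K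
  constructor
  · -- compactness of closure K
    rw [hind.isCompact_iff, hclK]
    have himg : ι '' (ι ⁻¹' T) = T := by
      apply image_preimage_eq_of_subset
      intro g hg
      exact ⟨show C(X,Z) from ⟨g, hTcont g hg⟩, rfl⟩
    rwa [himg]
  · -- sequences converging to points of the closure
    intro g hg
    set K' : Set (Cp X ℝ) := (fun f => distMap f g) '' K with hK'def
    have hK' : RelCountablyCompact K' := relCC_distMap_image hK g
    obtain ⟨-, hseq⟩ := h K' hK'
    have hg0 : distMap g g ∈ closure K' :=
      image_closure_subset_closure_image (continuous_distMap g) ⟨g, hg, rfl⟩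
    obtain ⟨v, hvK', hv⟩ := hseq (distMap g g) hg0
    choose f hfK hf using hvK'
    refine ⟨f, hfK, ?_⟩
    rw [hind.tendsto_nhds_iff]
    rw [tendsto_pi_nhds]
    intro x
    rw [tendsto_iff_dist_tendsto_zero]
    have hev : Tendsto (fun n => CpCoe X ℝ (v n) x) atTop
        (𝓝 (CpCoe X ℝ (distMap g g) x)) :=
      ((Cp.continuous_eval x).tendsto _).comp hv
    have heq : (fun n => dist ((ι ∘ f) n x) (ι g x)) = fun n => CpCoe X ℝ (v n) x := by
      funext n
      rw [← hf n]
      rfl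
    have hval : CpCoe X ℝ (distMap g g) x = 0 := by
      simp [CpCoe_distMap]
    rw [heq]
    rwa [hval] at hev

end Main
end
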